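/- arXiv:2405.16308 — 2 statements merged into one kernel-verified Lean document; each statement's English description precedes it below -/
import Mathlib

section
/- Let X be a σ-compact, locally compact Hausdorff space and let μ_n and μ be Radon measures on X (Borel, finite on compact sets, outer regular, and inner regular with respect to compact sets) with μ_n → μ vaguely, i.e. ∫ φ dμ_n → ∫ φ dμ for every continuous φ : X → ℝ with compact support. Let (K_m) be a decreasing sequence of compact subsets of X with μ(∂K_m) = 0 for every m and with intersection E := ⋂_m K_m. Let (n_m) be a strictly increasing sequence of indices such that |μ_{n_m}(K_m) − μ(E)| ≤ 2·|μ(K_m) − μ(E)| for every m. Then the restrictions of μ_{n_m} to K_m converge weak* to the restriction of μ to E: for every continuous φ : X → ℝ with compact support, ∫_{K_m} φ dμ_{n_m} → ∫_E φ dμ as m → ∞. -/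
/-!
Since `μ(K_m) ↓ μ(E)`, the choice of `n_m` forces `μ_{n_m}(K_m) → μ(E)`. Given `δ > 0`, outer
regularity and Urysohn's lemma give a compactly supported continuous cutoff `g ≥ 0` that equals `1`
on some `K_{m₀}` (hence on `E` and on every later `K_m`) with `∫ g dμ < μ(E) + δ`. With `|φ| ≤ C`,
`∫_{K_m} φ dμ_{n_m}` lies within `C (∫ g dμ_{n_m} - μ_{n_m}(K_m))` of `∫ φ g dμ_{n_m}`, which tends
to `∫ φ g dμ` by vague convergence, and that lies within `C (∫ g dμ - μ(E)) < C δ` of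
`∫_E φ dμ`; the first error term tends to the second.
-/

open MeasureTheory Filter Topology
open scoped ENNReal

theorem ENNReal.tendsto_of_le_add_of_le_add {ι : Type*} {l : Filter ι} {x d : ι → ℝ≥0∞}
    {a : ℝ≥0∞} (ha : a ≠ ∞) (hd : Tendsto d l (𝓝 0))
    (hle : ∀ i, x i ≤ a + d i) (hge : ∀ i, a ≤ x i + d i) : Tendsto x l (𝓝 a) := by
  refine tendsto_of_tendsto_of_tendsto_of_le_of_le ?_ ?_ (fun i => tsub_le_iff_right.2 (hge i)) hle
  · simpa using ENNReal.Tendsto.sub tendsto_const_nhds hd (Or.inl ha)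
  · simpa using tendsto_const_nhds.add hd

theorem tendsto_of_forall_dist_approx {ι α : Type*} [PseudoMetricSpace α] {l : Filter ι}
    {u : ι → α} {a : α}
    (h : ∀ δ > 0, ∃ v : ι → α, ∃ b, Tendsto v l (𝓝 b) ∧
      (∀ᶠ i in l, dist (u i) (v i) ≤ δ) ∧ dist a b ≤ δ) :
    Tendsto u l (𝓝 a) := by
  refine Metric.tendsto_nhds.2 fun ε hε => ?_
  obtain ⟨v, b, hv, huv, hab⟩ := h (ε / 4) (by positivity)
  filter_upwards [huv, Metric.tendsto_nhds.1 hv (ε / 4) (by positivity)] with i hui hvi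
  calc dist (u i) a ≤ dist (u i) (v i) + dist (v i) b + dist a b :=
        (dist_triangle4 _ _ b _).trans_eq (by rw [dist_comm b a])
    _ < ε := by linarith

section Integrals

variable {X : Type*} [MeasurableSpace X] {ν : Measure X}

theorem integral_le_measureReal_of_le_indicator_one {g : X → ℝ} {U : Set X}
    (hU : MeasurableSet U) (hνU : ν U ≠ ∞) (hg0 : 0 ≤ g) (hg : g ≤ U.indicator 1) :
    ∫ x, g x ∂ν ≤ ν.real U := by
  rw [← integral_indicator_one hU]
  exact integral_mono_of_nonneg (ae_of_all _ hg0)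
    ((integrableOn_const hνU).integrable_indicator hU) (ae_of_all _ hg)

theorem dist_setIntegral_integral_mul_le {φ g : X → ℝ} {S : Set X} {C : ℝ}
    (hS : MeasurableSet S) (hφ : ∀ x, |φ x| ≤ C) (hg0 : 0 ≤ g) (hgS : Set.EqOn g 1 S)
    (hφg : Integrable (fun x => φ x * g x) ν) (hg : Integrable g ν) :
    dist (∫ x in S, φ x ∂ν) (∫ x, φ x * g x ∂ν) ≤ C * (∫ x, g x ∂ν - ν.real S) := by
  have hφS : ∫ x in S, φ x ∂ν = ∫ x in S, φ x * g x ∂ν :=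
    setIntegral_congr_fun hS fun x hx => by simp [hgS hx]
  have hgS' : ∫ x in S, g x ∂ν = ν.real S := by
    simp [setIntegral_congr_fun hS hgS]
  rw [dist_comm, Real.dist_eq, hφS, ← integral_add_compl hS hφg, ← integral_add_compl hS hg,
    hgS', add_sub_cancel_left, add_sub_cancel_left, ← integral_const_mul]
  calc |∫ x in Sᶜ, φ x * g x ∂ν| ≤ ∫ x in Sᶜ, |φ x * g x| ∂ν := abs_integral_le_integral_abs
    _ ≤ ∫ x in Sᶜ, C * g x ∂ν := by
      refine integral_mono hφg.abs.restrict (hg.const_mul C).restrict fun x => ?_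
      rw [abs_mul, abs_of_nonneg (hg0 x)]
      exact mul_le_mul_of_nonneg_right (hφ x) (hg0 x)

end Integrals

theorem exists_continuous_eqOn_one_integral_lt {X : Type*} [TopologicalSpace X] [T2Space X]
    [LocallyCompactSpace X] [MeasurableSpace X] [OpensMeasurableSpace X] {μ : Measure X}
    [μ.OuterRegular] {K : ℕ → Set X} (hK : ∀ m, IsCompact (K m)) (hKanti : Antitone K)
    (hE : μ (⋂ m, K m) ≠ ∞) {η : ℝ} (hη : 0 < η) :
    ∃ g : C(X, ℝ), HasCompactSupport g ∧ 0 ≤ ⇑g ∧ (∃ m₀, Set.EqOn g 1 (K m₀)) ∧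
      ∫ x, g x ∂μ < μ.real (⋂ m, K m) + η := by
  obtain ⟨U, hEU, hU, hμU⟩ := Set.exists_isOpen_lt_add (μ := μ) _ hE
    (ε := ENNReal.ofReal η) (ENNReal.ofReal_pos.2 hη).ne'
  have hμU_ne_top : μ U ≠ ∞ := (hμU.trans_le le_top).ne
  obtain ⟨m₀, hKU⟩ : ∃ m₀, K m₀ ⊆ U :=
    exists_subset_nhds_of_isCompact hKanti.directed_ge hK fun x hx => hU.mem_nhds (hEU hx)
  obtain ⟨g, hg1, hg0, hgc, hg01⟩ := exists_continuous_one_zero_of_isCompact (hK m₀)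
    hU.isClosed_compl (Set.disjoint_compl_right_iff_subset.2 hKU)
  refine ⟨g, hgc, fun x => (hg01 x).1, ⟨m₀, hg1⟩, ?_⟩
  have hgU : ⇑g ≤ U.indicator 1 := fun x => by
    by_cases hx : x ∈ U
    · simpa [hx] using (hg01 x).2
    · simp [hx, hg0 hx]
  calc ∫ x, g x ∂μ ≤ μ.real U := integral_le_measureReal_of_le_indicator_one hU.measurableSet
        hμU_ne_top (fun x => (hg01 x).1) hgU
    _ < μ.real (⋂ m, K m) + η := by
      rw [measureReal_def, measureReal_def, ← ENNReal.toReal_ofReal hη.le,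
        ← ENNReal.toReal_add hE ENNReal.ofReal_ne_top]
      exact ENNReal.toReal_strict_mono (by finiteness) hμU

theorem vague_convergence_shrinking_restrict_general
    {X : Type*} [TopologicalSpace X] [T2Space X] [LocallyCompactSpace X]
    [MeasurableSpace X] [BorelSpace X]
    (μ' : ℕ → Measure X) (μ : Measure X)
    (hfin : ∀ n, IsFiniteMeasureOnCompacts (μ' n))
    (hμfin : IsFiniteMeasureOnCompacts μ)
    (hμouter : μ.OuterRegular)
    (hvague : ∀ φ : X → ℝ, Continuous φ → HasCompactSupport φ →
      Tendsto (fun n => ∫ x, φ x ∂(μ' n)) atTop (𝓝 (∫ x, φ x ∂μ)))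
    (K : ℕ → Set X) (hKcpt : ∀ m, IsCompact (K m)) (hKanti : Antitone K)
    (E : Set X) (hE : E = ⋂ m, K m)
    (nm : ℕ → ℕ) (hnm : StrictMono nm)
    (hsel : ∀ m, μ' (nm m) (K m) ≤ μ E + 2 * (μ (K m) - μ E) ∧
                 μ E ≤ μ' (nm m) (K m) + 2 * (μ (K m) - μ E)) :
    ∀ φ : X → ℝ, Continuous φ → HasCompactSupport φ →
      Tendsto (fun m => ∫ x in K m, φ x ∂(μ' (nm m))) atTop (𝓝 (∫ x in E, φ x ∂μ)) := by
  subst hE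
  intro φ hφ hφs
  obtain ⟨C, hC0, hC⟩ : ∃ C > 0, ∀ x, |φ x| ≤ C := by
    obtain ⟨C, hC⟩ := hφs.exists_bound_of_continuous hφ
    exact ⟨max C 1, by positivity, fun x => (hC x).trans (le_max_left C 1)⟩
  have hKmeas (m : ℕ) : MeasurableSet (K m) := (hKcpt m).isClosed.measurableSet
  have hE : μ (⋂ m, K m) ≠ ∞ :=
    ((measure_mono (Set.iInter_subset K 0)).trans_lt (hKcpt 0).measure_lt_top).ne
  have hμK : Tendsto (fun m => μ (K m)) atTop (𝓝 (μ (⋂ m, K m))) :=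
    tendsto_measure_iInter_atTop (fun m => (hKmeas m).nullMeasurableSet) hKanti
      ⟨0, (hKcpt 0).measure_lt_top.ne⟩
  have hgap : Tendsto (fun m => 2 * (μ (K m) - μ (⋂ m, K m))) atTop (𝓝 0) := by
    simpa using ENNReal.Tendsto.const_mul (ENNReal.Tendsto.sub hμK tendsto_const_nhds (Or.inr hE))
      (Or.inr ENNReal.ofNat_ne_top)
  have hμ'K : Tendsto (fun m => (μ' (nm m)).real (K m)) atTop (𝓝 (μ.real (⋂ m, K m))) :=
    (ENNReal.tendsto_toReal hE).comp <| ENNReal.tendsto_of_le_add_of_le_add hE hgap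
      (fun m => (hsel m).1) (fun m => (hsel m).2)
  refine tendsto_of_forall_dist_approx fun δ hδ => ?_
  obtain ⟨g, hgs, hg0, ⟨m₀, hg1⟩, hgμ⟩ :=
    exists_continuous_eqOn_one_integral_lt hKcpt hKanti hE (div_pos hδ hC0)
  have hφg : Continuous fun x => φ x * g x := hφ.mul g.continuous
  have hφgs : HasCompactSupport fun x => φ x * g x := hgs.mul_left
  have hexcess : C * (∫ x, g x ∂μ - μ.real (⋂ m, K m)) < δ := by
    rw [← lt_div_iff₀' hC0]; linarith
  have hlim : Tendsto (fun m => C * (∫ x, g x ∂μ' (nm m) - (μ' (nm m)).real (K m))) atTop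
      (𝓝 (C * (∫ x, g x ∂μ - μ.real (⋂ m, K m)))) :=
    (((hvague g g.continuous hgs).comp hnm.tendsto_atTop).sub hμ'K).const_mul C
  refine ⟨fun m => ∫ x, φ x * g x ∂μ' (nm m), ∫ x, φ x * g x ∂μ,
    (hvague _ hφg hφgs).comp hnm.tendsto_atTop, ?_, ?_⟩
  · filter_upwards [hlim.eventually (gt_mem_nhds hexcess), eventually_ge_atTop m₀] with m hm hm₀
    have := hfin (nm m)
    exact (dist_setIntegral_integral_mul_le (hKmeas m) hC hg0 (hg1.mono (hKanti hm₀))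
      (hφg.integrable_of_hasCompactSupport hφgs)
      (g.continuous.integrable_of_hasCompactSupport hgs)).trans hm.le
  · exact (dist_setIntegral_integral_mul_le (MeasurableSet.iInter hKmeas) hC hg0
      (hg1.mono (Set.iInter_subset K m₀)) (hφg.integrable_of_hasCompactSupport hφgs)
      (g.continuous.integrable_of_hasCompactSupport hgs)).trans hexcess.le

/-- **A step in the proof of Lemma 3.7 (lem8a) of the paper.**  Let `μₙ → μ` vaguely, with
all measures Radon, on a σ-compact locally compact Hausdorff space.  Let `(Kₘ)` be a
decreasing sequence of compact sets with `μ(∂Kₘ) = 0` and intersection `E`, and let `(nₘ)`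
be a strictly increasing sequence of indices such that
`|μ_{nₘ}(Kₘ) − μ(E)| ≤ 2·|μ(Kₘ) − μ(E)|` for all `m`.  Then the restrictions of `μ_{nₘ}`
to `Kₘ` converge weak* to the restriction of `μ` to `E`. -/
theorem vague_convergence_shrinking_restrict
    {X : Type*} [TopologicalSpace X] [T2Space X] [LocallyCompactSpace X]
    [SigmaCompactSpace X] [MeasurableSpace X] [BorelSpace X]
    (μ' : ℕ → Measure X) (μ : Measure X)
    (hfin : ∀ n, IsFiniteMeasureOnCompacts (μ' n))
    (houter : ∀ n, (μ' n).OuterRegular)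
    (hinner : ∀ n, (μ' n).InnerRegular)
    (hμfin : IsFiniteMeasureOnCompacts μ)
    (hμouter : μ.OuterRegular)
    (hμinner : μ.InnerRegular)
    (hvague : ∀ φ : X → ℝ, Continuous φ → HasCompactSupport φ →
      Tendsto (fun n => ∫ x, φ x ∂(μ' n)) atTop (𝓝 (∫ x, φ x ∂μ)))
    (K : ℕ → Set X) (hKcpt : ∀ m, IsCompact (K m)) (hKanti : Antitone K)
    (hKb : ∀ m, μ (frontier (K m)) = 0)
    (E : Set X) (hE : E = ⋂ m, K m)
    (nm : ℕ → ℕ) (hnm : StrictMono nm)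
    (hsel : ∀ m, μ' (nm m) (K m) ≤ μ E + 2 * (μ (K m) - μ E) ∧
                 μ E ≤ μ' (nm m) (K m) + 2 * (μ (K m) - μ E)) :
    ∀ φ : X → ℝ, Continuous φ → HasCompactSupport φ →
      Tendsto (fun m => ∫ x in K m, φ x ∂(μ' (nm m))) atTop (𝓝 (∫ x in E, φ x ∂μ)) :=
  vague_convergence_shrinking_restrict_general μ' μ hfin hμfin hμouter hvague K hKcpt hKanti E hE nm
    hnm hsel
end

section
/- For all real numbers a, b ∈ [0,1] and all complex numbers ξ, η with |ξ| = |η| = 1, Re ξ ≥ 0 and Re η ≥ 0, one has (a + b − a·b)² · |a·ξ − b·η|² ≥ |a·ξ + b·conj(η) − a·b·ξ·conj(η)|² · (a − b)². -/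
/-!
With `T z = 1 - ‖1 - z‖`, the inequality reads `ρ(T z, T w) ≤ ρ(z, w)` for the pseudo-hyperbolic
distance `ρ(z, w) = |z - w| / |1 - z w̄|`, at `z = 1 - a ξ`, `w = 1 - b η`. The identity
`|1 - z w̄|² = |z - w|² + (1 - |z|²)(1 - |w|²)` and its real analogue for `T z, T w` reduce it to
`(1 - |z|²)(1 - |w|²)(T z - T w)² ≤ (1 - (T z)²)(1 - (T w)²)|z - w|²`. This follows factor by factor:
`|T z - T w| ≤ |z - w|` by the reverse triangle inequality, and `|1 - |z|²| ≤ 1 - (T z)²` once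
`|1 - z| ≤ 1` and `Re z ≤ 1`, since `1 - |z|² = 2 Re (1 - z) - |1 - z|²`.
-/

open ComplexConjugate

noncomputable def circularProjection (z : ℂ) : ℝ := 1 - ‖1 - z‖

theorem Complex.sq_norm_one_sub_mul_conj (z w : ℂ) :
    ‖1 - z * conj w‖ ^ 2 = ‖z - w‖ ^ 2 + (1 - ‖z‖ ^ 2) * (1 - ‖w‖ ^ 2) := by
  simp only [Complex.sq_norm, Complex.normSq_apply, Complex.sub_re, Complex.sub_im,
    Complex.mul_re, Complex.mul_im, Complex.one_re, Complex.one_im, Complex.conj_re,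
    Complex.conj_im]
  ring

theorem sq_norm_one_sub_mul_conj_mul_sq_le {z w : ℂ} {s t : ℝ}
    (h : (1 - ‖z‖ ^ 2) * (1 - ‖w‖ ^ 2) * (s - t) ^ 2 ≤ (1 - s ^ 2) * (1 - t ^ 2) * ‖z - w‖ ^ 2) :
    ‖1 - z * conj w‖ ^ 2 * (s - t) ^ 2 ≤ (1 - s * t) ^ 2 * ‖z - w‖ ^ 2 := by
  rw [Complex.sq_norm_one_sub_mul_conj]
  linear_combination h

theorem Complex.one_sub_sq_norm_eq_two_mul_re_sub (z : ℂ) :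
    1 - ‖z‖ ^ 2 = 2 * (1 - z).re - ‖1 - z‖ ^ 2 := by
  simp only [Complex.sq_norm, Complex.normSq_apply, Complex.sub_re, Complex.sub_im,
    Complex.one_re, Complex.one_im]
  ring

theorem abs_one_sub_sq_norm_le {z : ℂ} (hre : z.re ≤ 1) (hz : ‖1 - z‖ ≤ 1) :
    |1 - ‖z‖ ^ 2| ≤ 1 - circularProjection z ^ 2 := by
  have hre' : 0 ≤ (1 - z).re := by simpa using hre
  have := Complex.re_le_norm (1 - z)
  rw [circularProjection, Complex.one_sub_sq_norm_eq_two_mul_re_sub, abs_le]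
  constructor <;> nlinarith [norm_nonneg (1 - z)]

theorem sq_circularProjection_sub_le_sq_norm_sub (z w : ℂ) :
    (circularProjection z - circularProjection w) ^ 2 ≤ ‖z - w‖ ^ 2 := by
  have h := abs_norm_sub_norm_le (1 - w) (1 - z)
  rw [sub_sub_sub_cancel_left] at h
  rw [circularProjection, circularProjection, sub_sub_sub_cancel_left, ← sq_abs]
  gcongr

theorem sq_norm_one_sub_mul_conj_mul_sq_circularProjection_le {z w : ℂ}
    (hzre : z.re ≤ 1) (hz : ‖1 - z‖ ≤ 1) (hwre : w.re ≤ 1) (hw : ‖1 - w‖ ≤ 1) :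
    ‖1 - z * conj w‖ ^ 2 * (circularProjection z - circularProjection w) ^ 2 ≤
      (1 - circularProjection z * circularProjection w) ^ 2 * ‖z - w‖ ^ 2 := by
  apply sq_norm_one_sub_mul_conj_mul_sq_le
  have hz' := abs_one_sub_sq_norm_le hzre hz
  have hw' := abs_one_sub_sq_norm_le hwre hw
  calc (1 - ‖z‖ ^ 2) * (1 - ‖w‖ ^ 2) * (circularProjection z - circularProjection w) ^ 2
      ≤ |1 - ‖z‖ ^ 2| * |1 - ‖w‖ ^ 2| * (circularProjection z - circularProjection w) ^ 2 := by
        rw [← abs_mul]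
        exact mul_le_mul_of_nonneg_right (le_abs_self _) (sq_nonneg _)
    _ ≤ (1 - circularProjection z ^ 2) * (1 - circularProjection w ^ 2) * ‖z - w‖ ^ 2 :=
        mul_le_mul (mul_le_mul hz' hw' (abs_nonneg _) ((abs_nonneg _).trans hz'))
          (sq_circularProjection_sub_le_sq_norm_sub z w) (sq_nonneg _)
          (mul_nonneg ((abs_nonneg _).trans hz') ((abs_nonneg _).trans hw'))

theorem circularProjection_one_sub_ofReal_mul {c : ℝ} (hc : 0 ≤ c) {ζ : ℂ} (hζ : ‖ζ‖ = 1) :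
    circularProjection (1 - c * ζ) = 1 - c := by
  simp [circularProjection, hζ, abs_of_nonneg hc]

/-- **Inequality (lueck3) from the proof of Lemma A.1 of the paper.**  For `a, b ∈ [0,1]`
and unimodular `ξ, η` with nonnegative real parts,
`(a + b − a·b)²·|a·ξ − b·η|² ≥ |a·ξ + b·conj η − a·b·ξ·conj η|²·(a − b)²`. -/
theorem lueck3_inequality
    (a b : ℝ) (ha : a ∈ Set.Icc (0 : ℝ) 1) (hb : b ∈ Set.Icc (0 : ℝ) 1)
    (ξ η : ℂ) (hξ : ‖ξ‖ = 1) (hη : ‖η‖ = 1)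
    (hξre : 0 ≤ ξ.re) (hηre : 0 ≤ η.re) :
    ‖(a : ℂ) * ξ + (b : ℂ) * (starRingEnd ℂ) η
          - (a : ℂ) * (b : ℂ) * ξ * (starRingEnd ℂ) η‖ ^ 2 * (a - b) ^ 2 ≤
      (a + b - a * b) ^ 2 * ‖(a : ℂ) * ξ - (b : ℂ) * η‖ ^ 2 := by
  obtain ⟨ha0, ha1⟩ := ha
  obtain ⟨hb0, hb1⟩ := hb
  have hre {c : ℝ} (hc : 0 ≤ c) {ζ : ℂ} (hζ : 0 ≤ ζ.re) : (1 - c * ζ).re ≤ 1 := by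
    simpa using mul_nonneg hc hζ
  have hnorm {c : ℝ} (hc : 0 ≤ c) (hc1 : c ≤ 1) {ζ : ℂ} (hζ : ‖ζ‖ = 1) :
      ‖1 - (1 - c * ζ)‖ ≤ 1 := by
    simpa [hζ, abs_of_nonneg hc] using hc1
  have key := sq_norm_one_sub_mul_conj_mul_sq_circularProjection_le
    (hre ha0 hξre) (hnorm ha0 ha1 hξ) (hre hb0 hηre) (hnorm hb0 hb1 hη)
  rw [circularProjection_one_sub_ofReal_mul ha0 hξ,
    circularProjection_one_sub_ofReal_mul hb0 hη] at key
  have hnum : 1 - (1 - (a : ℂ) * ξ) * conj (1 - (b : ℂ) * η)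
      = a * ξ + b * conj η - a * b * ξ * conj η := by
    simp only [map_sub, map_one, map_mul, Complex.conj_ofReal]
    ring
  have hdist : ‖1 - (a : ℂ) * ξ - (1 - b * η)‖ = ‖(a : ℂ) * ξ - b * η‖ := by
    rw [← norm_neg]
    ring_nf
  rw [hnum, hdist] at key
  convert key using 2 <;> ring
end
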